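/- arXiv:2105.11634 — 3 statements merged into one kernel-verified Lean document; each statement's English description precedes it below -/
import Mathlib

section
/- Let x₁, ..., x_N be strictly positive real numbers. Then the N×N matrix A with entries A_{ij} = min(x_i, x_j) is positive semi-definite. -/
open MeasureTheory Set

lemma Real.volume_real_Ioc_zero_inter_Ioc_zero {a b : ℝ} (ha : 0 ≤ a) (hb : 0 ≤ b) :
    volume.real (Ioc 0 a ∩ Ioc 0 b) = min a b := by
  rw [Ioc_inter_Ioc, max_self, Real.volume_real_Ioc_of_le (le_min ha hb), sub_zero]

theorem min_matrix_posSemidef_of_pos (N : ℕ) (x : Fin N → ℝ) (hx : ∀ i, 0 < x i) :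
    (Matrix.of fun i j => min (x i) (x j)).PosSemidef := by
  -- The min matrix is the Gram matrix of the indicators of the intervals `(0, xᵢ]` in `L²(ℝ)`.
  have hmin : ∀ i j, min (x i) (x j) = volume.real (Ioc 0 (x i) ∩ Ioc 0 (x j)) := fun i j =>
    (Real.volume_real_Ioc_zero_inter_Ioc_zero (hx i).le (hx j).le).symm
  simpa only [hmin] using posSemidef_matrix_measure_inter (μ := volume) (fun _ => measurableSet_Ioc)
    fun _ => measure_Ioc_lt_top.ne
end

section
/- Let x₁, ..., x_N be arbitrary real numbers. Then the N×N matrix K with entries K_{ij} = sign(x_i x_j)·min(|x_i|, |x_j|) is symmetric and positive semi-definite. -/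
/-!
The entry `sign (x y) * min |x| |y|` is the `L²(ℝ)` inner product of the functions
`sign x · 𝟙_(0, |x|)` and `sign y · 𝟙_(0, |y|)`, so the matrix is a Gram matrix.
-/

open MeasureTheory

theorem Real.sign_mul (a b : ℝ) : Real.sign (a * b) = Real.sign a * Real.sign b := by
  rcases lt_trichotomy a 0 with ha | rfl | ha <;> rcases lt_trichotomy b 0 with hb | rfl | hb <;>
    simp [Real.sign_of_pos, Real.sign_of_neg, *, mul_pos_of_neg_of_neg, mul_neg_of_neg_of_pos,
      mul_neg_of_pos_of_neg]

theorem Real.volume_real_Ioo_inter_Ioo_zero {a b : ℝ} (ha : 0 ≤ a) (hb : 0 ≤ b) :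
    volume.real (Set.Ioo 0 a ∩ Set.Ioo 0 b) = min a b := by
  rw [Set.Ioo_inter_Ioo, max_self, Real.volume_real_Ioo_of_le (le_min ha hb), sub_zero]

noncomputable def signedSegmentIndicator (x : ℝ) : Lp ℝ 2 (volume : Measure ℝ) :=
  indicatorConstLp 2 measurableSet_Ioo (measure_Ioo_lt_top (a := 0) (b := |x|)).ne (Real.sign x)

theorem inner_signedSegmentIndicator (x y : ℝ) :
    inner ℝ (signedSegmentIndicator x) (signedSegmentIndicator y) =
      Real.sign (x * y) * min |x| |y| := by
  rw [signedSegmentIndicator, signedSegmentIndicator,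
    L2.inner_indicatorConstLp_indicatorConstLp _ _ measure_Ioo_lt_top.ne measure_Ioo_lt_top.ne,
    Real.volume_real_Ioo_inter_Ioo_zero (abs_nonneg x) (abs_nonneg y), Real.sign_mul,
    RCLike.inner_apply', conj_trivial, smul_eq_mul, mul_comm]

theorem sign_min_matrix_posSemidef (N : ℕ) (x : Fin N → ℝ) :
    (Matrix.of fun i j => Real.sign (x i * x j) * min |x i| |x j|).IsSymm ∧
    (Matrix.of fun i j => Real.sign (x i * x j) * min |x i| |x j|).PosSemidef := by
  have hgram : (Matrix.of fun i j => Real.sign (x i * x j) * min |x i| |x j|) =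
      Matrix.gram ℝ (fun i => signedSegmentIndicator (x i)) := by
    ext i j
    rw [Matrix.gram_apply, inner_signedSegmentIndicator, Matrix.of_apply]
  have hpsd := hgram ▸ Matrix.posSemidef_gram ℝ (fun i => signedSegmentIndicator (x i))
  exact ⟨Matrix.isHermitian_iff_isSymm.mp hpsd.isHermitian, hpsd⟩
end

section
/- Let x₁, ..., x_N ∈ ℝ^D and define the N×N matrix A by A_{ij} = Σ_{k=1}^D 𝟙(sign((x_i)_k) = sign((x_j)_k))·min(|(x_i)_k|, |(x_j)_k|). Then A is symmetric and positive semi-definite. -/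
/-!
For real `a`, `b` the entry `𝟙(sign a = sign b) · min |a| |b|` is the length of the intersection
of the interval between `0` and `a` with the one between `0` and `b` (`uIoc 0 a ∩ uIoc 0 b`).
So each coordinate contributes a Gram matrix of indicator functions in `L²(ℝ)`, which is positive
semidefinite, and `A` is the sum of these matrices over the coordinates.
-/

open MeasureTheory Set

lemma volume_real_uIoc_zero_inter_uIoc_zero (a b : ℝ) :
    volume.real (uIoc 0 a ∩ uIoc 0 b) =
      (if Real.sign a = Real.sign b then 1 else 0) * min |a| |b| := by
  rcases lt_trichotomy a 0 with ha | rfl | ha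
  · rcases lt_trichotomy b 0 with hb | rfl | hb
    · simp [Real.sign_of_neg, ha, hb, uIoc_of_ge, ha.le, hb.le, Ioc_inter_Ioc, abs_of_neg,
        min_neg_neg]
    · simp
    · norm_num [Real.sign_of_neg, Real.sign_of_pos, ha, hb, uIoc_of_ge, uIoc_of_le, ha.le, hb.le,
        Ioc_inter_Ioc]
  · simp
  · rcases lt_trichotomy b 0 with hb | rfl | hb
    · norm_num [Real.sign_of_neg, Real.sign_of_pos, ha, hb, uIoc_of_ge, uIoc_of_le, ha.le, hb.le,
        Ioc_inter_Ioc]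
    · simp
    · simp [Real.sign_of_pos, ha, hb, uIoc_of_le, ha.le, hb.le, Ioc_inter_Ioc, abs_of_pos]

theorem Matrix.posSemidef_sameSign_min {ι : Type*} [Finite ι] (u : ι → ℝ) :
    (Matrix.of fun i j =>
      (if Real.sign (u i) = Real.sign (u j) then (1:ℝ) else 0) * min |u i| |u j|).PosSemidef := by
  simp only [← volume_real_uIoc_zero_inter_uIoc_zero]
  exact posSemidef_matrix_measure_inter (fun _ => measurableSet_uIoc)
    (fun _ => measure_Ioc_lt_top.ne)

theorem Matrix.posSemidef_sum_sameSign_min {ι κ : Type*} [Finite ι] [Fintype κ]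
    (x : ι → κ → ℝ) :
    (Matrix.of fun i j => ∑ k,
      (if Real.sign (x i k) = Real.sign (x j k) then (1:ℝ) else 0) * min |x i k| |x j k|).PosSemidef := by
  convert Matrix.posSemidef_sum Finset.univ fun k _ => Matrix.posSemidef_sameSign_min (x · k)
  ext i j
  simp [Matrix.sum_apply]

theorem indicator_covariance_posSemidef (N D : ℕ) (x : Fin N → Fin D → ℝ) :
    (Matrix.of fun i j => ∑ k,
      (if Real.sign (x i k) = Real.sign (x j k) then (1:ℝ) else 0) * min |x i k| |x j k|).IsSymm ∧
    (Matrix.of fun i j => ∑ k,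
      (if Real.sign (x i k) = Real.sign (x j k) then (1:ℝ) else 0) * min |x i k| |x j k|).PosSemidef := by
  have hA := Matrix.posSemidef_sum_sameSign_min x
  exact ⟨Matrix.isHermitian_iff_isSymm.mp hA.isHermitian, hA⟩
end
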